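/- With A, p, F_p as above and χ evaluative, if {ψ_i}_i are F_p-linearly independent elements of Hom_A(A/p, M) for a p-torsion A-module M that decomposes as M = ⊕_i im(ψ_i), then the Gauss-Thakur sums {g(χ,ψ_i)}_i are F_p-linearly independent in F_p⊗_F M (with F_p acting on the left tensor factor). -/

import Mathlib

/-!
Write `σ : A/p → A/p` for the map induced by `χ`. For each `j`, the projection of
`M = ⊕ᵢ im ψᵢ` onto `im ψⱼ`, followed by `ψⱼ⁻¹` and `σ`, is an `F`-linear map `M → A/p`;
its base change `(A/p) ⊗_F M → A/p` sends `g(χ, ψᵢ)` to `0` for `i ≠ j` and `g(χ, ψⱼ)` to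
`-∑_{x ∈ (A/p)ˣ} σ(x)⁻¹ σ(x) = -(#(A/p) - 1) = 1`. A family admitting such a biorthogonal system of
functionals is linearly independent.
-/

open TensorProduct

attribute [local instance] Ideal.Quotient.field

theorem LinearIndependent.of_biorthogonal {R V ι : Type*} [Semiring R] [AddCommMonoid V]
    [Module R V] {v : ι → V} (Φ : ι → V →ₗ[R] R) (h_same : ∀ i, Φ i (v i) = 1)
    (h_ne : ∀ i j, i ≠ j → Φ j (v i) = 0) : LinearIndependent R v := by
  classical
  have hdual : LinearMap.pi Φ ∘ v = fun i => Pi.single i 1 := by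
    ext i j
    obtain rfl | hij := eq_or_ne i j
    · simp [h_same]
    · simp [h_ne i j hij, hij.symm]
  refine LinearIndependent.of_comp (LinearMap.pi Φ) ?_
  rw [hdual]
  exact Pi.linearIndependent_single_one ι R

instance Ideal.Quotient.isSimpleModule {A : Type*} [CommRing A] (p : Ideal A) [p.IsMaximal] :
    IsSimpleModule A (A ⧸ p) :=
  isSimpleModule_iff_isCoatom.2 (Ideal.isMaximal_def.1 ‹_›)

theorem DirectSum.IsInternal.exists_retraction_range {R M N ι : Type*} [Ring R]
    [AddCommGroup M] [Module R M] [AddCommGroup N] [Module R N] [DecidableEq ι]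
    {ψ : ι → N →ₗ[R] M} (hψ : ∀ i, Function.Injective (ψ i))
    (h : DirectSum.IsInternal fun i => LinearMap.range (ψ i)) (j : ι) :
    ∃ f : M →ₗ[R] N, (∀ x, f (ψ j x) = x) ∧ ∀ i, i ≠ j → ∀ x, f (ψ i x) = 0 := by
  let e := LinearEquiv.ofBijective (DirectSum.coeLinearMap fun i => LinearMap.range (ψ i)) h
  let ej := LinearEquiv.ofInjective (ψ j) (hψ j)
  refine ⟨ej.symm.toLinearMap ∘ₗ DirectSum.component R ι _ j ∘ₗ e.symm.toLinearMap, ?_, ?_⟩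
  · intro x
    have hx : e.symm (ψ j x) j = ej x :=
      h.ofBijective_coeLinearMap_of_mem (LinearMap.mem_range_self _ x)
    simp [← DirectSum.apply_eq_component, e, hx]
  · intro i hij x
    have hx : e.symm (ψ i x) j = 0 :=
      h.ofBijective_coeLinearMap_of_mem_ne hij (LinearMap.mem_range_self _ x)
    simp [← DirectSum.apply_eq_component, e, hx]

section GaussThakurSum

variable (F : Type*) {k M : Type*} [CommRing F] [Field k] [Fintype k] [DecidableEq k]
  [Algebra F k] [AddCommGroup M] [Module F M]

def gaussThakurSum (σ : k →+* k) (ψ : k → M) : k ⊗[F] M :=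
  -∑ x : kˣ, (σ x)⁻¹ ⊗ₜ[F] ψ x

variable {F}

theorem liftBaseChange_gaussThakurSum (σ : k →+* k) (ψ : k → M) (L : M →ₗ[F] k) (c : k)
    (hL : ∀ x : kˣ, L (ψ x) = c * σ x) : L.liftBaseChange k (gaussThakurSum F σ ψ) = c := by
  have hterm : ∀ x : kˣ, (σ x)⁻¹ • L (ψ x) = c := fun x => by
    rw [hL, smul_eq_mul, mul_left_comm, inv_mul_cancel₀ ((map_ne_zero σ).2 x.ne_zero), mul_one]
  have hcard : (Fintype.card kˣ : k) = -1 := by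
    rw [Fintype.card_units, Nat.cast_sub Fintype.card_pos, FiniteField.cast_card_eq_zero,
      Nat.cast_one, zero_sub]
  simp only [gaussThakurSum, map_neg, map_sum, LinearMap.liftBaseChange_tmul, hterm,
    Finset.sum_const, Finset.card_univ, nsmul_eq_mul, hcard]
  ring

end GaussThakurSum

theorem stmt13 (F : Type*) [Field F]
    (A : Type*) [CommRing A] [Algebra F A]
    (p : Ideal A) [p.IsMaximal] [Fintype (A ⧸ p)] [DecidableEq (A ⧸ p)]
    (M : Type*) [AddCommGroup M] [Module A M] [Module F M] [IsScalarTower F A M]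
    [Module (A ⧸ p) M] [SMulCommClass A (A ⧸ p) M]
    (χ : A →ₐ[F] (A ⧸ p)) (hker : ∀ a : A, χ a = 0 ↔ a ∈ p)
    (ι : Type*) (ψ : ι → ((A ⧸ p) →ₗ[A] M))
    (hindep : LinearIndependent (A ⧸ p) ψ)
    (hdirect : iSupIndep (fun i => LinearMap.range (ψ i)))
    (hspan : ⨆ i, LinearMap.range (ψ i) = ⊤) :
    LinearIndependent (A ⧸ p)
      (fun i => (- ∑ x : (A ⧸ p)ˣ,
          ((Ideal.Quotient.lift p (χ : A →+* A ⧸ p)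
              (fun a ha => (hker a).mpr ha)) ((x : A ⧸ p)))⁻¹ ⊗ₜ[F] (ψ i) ((x : A ⧸ p)) :
        (A ⧸ p) ⊗[F] M)) := by
  classical
  let σ := Ideal.Quotient.liftₐ p χ fun a ha => (hker a).mpr ha
  have hinj : ∀ i, Function.Injective (ψ i) := fun i =>
    (ψ i).injective_or_eq_zero.resolve_right (hindep.ne_zero i)
  have hint : DirectSum.IsInternal fun i => LinearMap.range (ψ i) :=
    (DirectSum.isInternal_submodule_iff_iSupIndep_and_iSup_eq_top _).2 ⟨hdirect, hspan⟩
  choose f hf_same hf_ne using hint.exists_retraction_range hinj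
  let Φ j := (σ.toLinearMap ∘ₗ (f j).restrictScalars F).liftBaseChange (A ⧸ p)
  change LinearIndependent _ fun i => gaussThakurSum F σ.toRingHom (ψ i)
  refine .of_biorthogonal Φ (fun i => ?_) (fun i j hij => ?_)
  · exact liftBaseChange_gaussThakurSum _ _ _ 1 fun x => by simp [hf_same, σ]
  · exact liftBaseChange_gaussThakurSum _ _ _ 0 fun x => by simp [hf_ne j i hij, σ]
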